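/- Let S ⊆ X be both A-projection absorbing and B-projection absorbing, let (λ_n) and (μ_n) be nonincreasing sequences in (0,1] with limits λ_∞ and μ_∞, and assume 1 > α_0 := max{λ_0, μ_0} and min{λ_∞, μ_∞} > 0. Let c ∈ A ∩ B and suppose the CQ condition N_A^S(c) ∩ (−N_B^S(c)) ⊆ {0} holds. Let θ̄ be the limiting CQ-number at c associated with (A,S,B,S), assume θ̄ < 1, let θ ∈ (θ̄, 1), and let ρ̂ ∈ (0,1) be defined by ρ̂² := sup_{n∈ℕ} max{ (λ_{n+1}/λ_n)²·(λ_n² + (1−λ_n)² + 2θλ_n(1−λ_n)), (μ_{n+1}/μ_n)²·(μ_n² + (1−μ_n)² + 2θμ_n(1−μ_n)) }. Then there exists δ > 0 such that for every starting point y_{−1} ∈ S with ‖y_{−1} − c‖ ≤ δ, the MARP sequences (x_n) and (y_n) converge linearly with rate ρ̂ to a point of A ∩ B. -/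

import Mathlib

/-!
Near `c`, the proximal normals `y - a ∈ pn_A^S(a)` and `x - b ∈ pn_B^S(b)` generated by the
iteration satisfy `⟪u, -w⟫ ≤ θ ‖u‖ ‖w‖`, because the CQ-number is below `θ` there. Since
`y_n - a_n = (1 - λ_n)(y_{n-1} - a_n) - μ_n (x_n - b_n)` and `a_{n+1}` is at least as close to
`y_n` as `a_n` is, this angle bound turns into
`λ_{n+1} ‖y_n - a_{n+1}‖ ≤ ρ̂ max (λ_n ‖y_{n-1} - a_n‖) (μ_n ‖x_n - b_n‖)`, and symmetrically for
the projection onto `B`. These two weighted distances are the lengths of the two half-steps, so the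
step lengths decay geometrically. This keeps the iterates in the ball where the angle bound holds,
makes them a Cauchy sequence, and forces the distances to `A` and to `B` to vanish, so the limit
lies in `A ∩ B`.
-/

open Filter Topology RealInnerProductSpace

/-- The set of nearest points of `u` in `C`. -/
def projSet {X : Type*} [NormedAddCommGroup X] (C : Set X) (u : X) : Set X :=
  {c ∈ C | ‖u - c‖ = Metric.infDist u C}

/-- MARP sequences: here `Y n` denotes `y_{n-1}`, so `Y 0 = y_{-1}` is the starting
point and `Y (n+1) = y_n`. -/
def IsMARP {X : Type*} [NormedAddCommGroup X] [NormedSpace ℝ X]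
    (A B : Set X) (lam mu : ℕ → ℝ) (a x b Y : ℕ → X) : Prop :=
  ∀ n : ℕ, a n ∈ projSet A (Y n) ∧ x n = (1 - lam n) • Y n + lam n • a n ∧
    b n ∈ projSet B (x n) ∧ Y (n + 1) = (1 - mu n) • x n + mu n • b n

/-- `S` is `A`-projection absorbing. -/
def ProjAbsorbing {X : Type*} [NormedAddCommGroup X] [NormedSpace ℝ X]
    (A S : Set X) : Prop :=
  ∀ s ∈ S, ∀ a ∈ projSet A s, segment ℝ s a ⊆ S

/-- The `D`-restricted proximal normal cone of `A` at `a`. -/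
def pnCone {X : Type*} [NormedAddCommGroup X] [NormedSpace ℝ X]
    (A D : Set X) (a : X) : Set X :=
  {u | ∃ t : ℝ, 0 ≤ t ∧ ∃ z ∈ D, a ∈ projSet A z ∧ u = t • (z - a)}

/-- The `D`-restricted normal cone of `A` at `a`. -/
def ncCone {X : Type*} [NormedAddCommGroup X] [NormedSpace ℝ X]
    (A D : Set X) (a : X) : Set X :=
  {u | ∃ (aseq useq : ℕ → X), (∀ k, aseq k ∈ A ∧ useq k ∈ pnCone A D (aseq k)) ∧
    Tendsto aseq atTop (nhds a) ∧ Tendsto useq atTop (nhds u)}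

/-- The CQ-number at `c` associated with `(A,S,B,S)` and `δ`. -/
noncomputable def cqNumber {X : Type*} [NormedAddCommGroup X]
    [InnerProductSpace ℝ X] (A B S : Set X) (c : X) (δ : ℝ) : ℝ :=
  sSup {r : ℝ | ∃ p ∈ A, ∃ q ∈ B, ∃ u ∈ pnCone A S p, ∃ v : X, -v ∈ pnCone B S q ∧
    ‖u‖ ≤ 1 ∧ ‖v‖ ≤ 1 ∧ ‖p - c‖ ≤ δ ∧ ‖q - c‖ ≤ δ ∧ r = ⟪u, v⟫}

open Set

noncomputable def rateTerm (θ l l' : ℝ) : ℝ :=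
  (l' / l) ^ 2 * (l ^ 2 + (1 - l) ^ 2 + 2 * θ * l * (1 - l))

lemma rateTerm_pos {θ l l' : ℝ} (hθ : 0 ≤ θ) (hl : 0 < l) (hl1 : l ≤ 1) (hl' : 0 < l') :
    0 < rateTerm θ l l' := by
  unfold rateTerm
  have := mul_nonneg (mul_nonneg hθ hl.le) (sub_nonneg.2 hl1)
  exact mul_pos (by positivity) (by nlinarith)

lemma rateTerm_le {θ l l' a b : ℝ} (hθ : 0 ≤ θ) (hθ1 : θ < 1) (hl : 0 < l) (hl' : 0 ≤ l')
    (hl'l : l' ≤ l) (hal : a ≤ l) (hlb : l ≤ b) (hb : b < 1) :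
    rateTerm θ l l' ≤ 1 - 2 * (1 - θ) * (a * (1 - b)) := by
  have hq : l ^ 2 + (1 - l) ^ 2 + 2 * θ * l * (1 - l) = 1 - 2 * (1 - θ) * (l * (1 - l)) := by
    ring
  have hq0 : 0 ≤ 1 - 2 * (1 - θ) * (l * (1 - l)) := by
    rw [← hq]
    nlinarith [mul_nonneg (mul_nonneg hθ hl.le) (by linarith : (0 : ℝ) ≤ 1 - l)]
  have hratio : (l' / l) ^ 2 ≤ 1 := pow_le_one₀ (by positivity) ((div_le_one hl).2 hl'l)
  have hab : a * (1 - b) ≤ l * (1 - l) := mul_le_mul hal (by linarith) (by linarith) hl.le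
  calc rateTerm θ l l' ≤ 1 - 2 * (1 - θ) * (l * (1 - l)) := by
        rw [rateTerm, hq]; exact mul_le_of_le_one_left hq0 hratio
    _ ≤ 1 - 2 * (1 - θ) * (a * (1 - b)) := by
        nlinarith [mul_le_mul_of_nonneg_left hab (by linarith : (0 : ℝ) ≤ 2 * (1 - θ))]

lemma exists_rateTerm_le_lt_one {θ linf : ℝ} {l : ℕ → ℝ} (hθ : 0 ≤ θ) (hθ1 : θ < 1)
    (hl : ∀ n, 0 < l n) (hanti : Antitone l) (hlim : Tendsto l atTop (𝓝 linf))
    (hlinf : 0 < linf) (hl0 : l 0 < 1) :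
    ∃ b < 1, ∀ n, rateTerm θ (l n) (l (n + 1)) ≤ b :=
  ⟨_, by nlinarith [mul_pos hlinf (sub_pos.2 hl0)], fun n =>
    rateTerm_le hθ hθ1 (hl n) (hl (n + 1)).le (hanti n.le_succ) (hanti.le_of_tendsto hlim n)
      (hanti n.zero_le) hl0⟩

lemma sqrt_iSup_mem_Ioo_and_le_sq {F : ℕ → ℝ} {b : ℝ} (hF0 : 0 < F 0) (hF : ∀ n, F n ≤ b)
    (hb : b < 1) : √(⨆ n, F n) ∈ Ioo 0 1 ∧ ∀ n, F n ≤ √(⨆ n, F n) ^ 2 := by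
  have hbdd : BddAbove (range F) := ⟨b, forall_mem_range.2 hF⟩
  have hpos : 0 < ⨆ n, F n := hF0.trans_le (le_ciSup hbdd 0)
  refine ⟨⟨Real.sqrt_pos.2 hpos, (Real.sqrt_lt' one_pos).2 ?_⟩, fun n => ?_⟩
  · rw [one_pow]; exact (ciSup_le hF).trans_lt hb
  · rw [Real.sq_sqrt hpos.le]; exact le_ciSup hbdd n

theorem le_geometric_of_contracting_near {α : Type*} [PseudoMetricSpace α] {Y : ℕ → α}
    {g : ℕ → ℝ} {c : α} {K ρ R : ℝ} (hK : 0 ≤ K) (hρ0 : 0 ≤ ρ) (hρ1 : ρ < 1)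
    (hstep : ∀ n, dist (Y n) (Y (n + 1)) ≤ K * g n)
    (hcontr : ∀ n, dist (Y n) c ≤ R → dist (Y (n + 1)) c ≤ R → g (n + 1) ≤ ρ * g n)
    (h0 : dist (Y 0) c + K * g 0 / (1 - ρ) ≤ R) (n : ℕ) : g n ≤ g 0 * ρ ^ n := by
  have hKg : 0 ≤ K * g 0 := dist_nonneg.trans (hstep 0)
  have h1ρ : 0 < 1 - ρ := sub_pos.2 hρ1
  have hR : ∀ k : ℕ, dist (Y 0) c + K * g 0 * (1 - ρ ^ k) / (1 - ρ) ≤ R := fun k =>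
    h0.trans' <| (add_le_add_iff_left _).2 <| div_le_div_of_nonneg_right
      (mul_le_of_le_one_right hKg (sub_le_self _ (pow_nonneg hρ0 k))) h1ρ.le
  have key : ∀ n, dist (Y n) c ≤ dist (Y 0) c + K * g 0 * (1 - ρ ^ n) / (1 - ρ) ∧
      g n ≤ g 0 * ρ ^ n := by
    intro n
    induction n with
    | zero => simp
    | succ n ih =>
      have hdist : dist (Y (n + 1)) c ≤ dist (Y 0) c + K * g 0 * (1 - ρ ^ (n + 1)) / (1 - ρ) :=
        calc dist (Y (n + 1)) c ≤ dist (Y n) (Y (n + 1)) + dist (Y n) c := dist_triangle_left ..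
          _ ≤ K * (g 0 * ρ ^ n) + (dist (Y 0) c + K * g 0 * (1 - ρ ^ n) / (1 - ρ)) :=
            add_le_add ((hstep n).trans (mul_le_mul_of_nonneg_left ih.2 hK)) ih.1
          _ = dist (Y 0) c + K * g 0 * (1 - ρ ^ (n + 1)) / (1 - ρ) := by
            field_simp; ring
      refine ⟨hdist, ?_⟩
      calc g (n + 1) ≤ ρ * g n := hcontr n (ih.1.trans (hR n)) (hdist.trans (hR _))
        _ ≤ ρ * (g 0 * ρ ^ n) := mul_le_mul_of_nonneg_left ih.2 hρ0
        _ = g 0 * ρ ^ (n + 1) := by ring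
  exact (key n).2

section Normed

variable {X : Type*} [NormedAddCommGroup X]

lemma norm_sub_le_of_mem_projSet {C : Set X} {y p z : X} (hp : p ∈ projSet C y) (hz : z ∈ C) :
    ‖y - p‖ ≤ ‖y - z‖ := by
  rw [hp.2, ← dist_eq_norm]
  exact Metric.infDist_le_dist_of_mem hz

lemma norm_sub_le_two_mul_of_mem_projSet {C : Set X} {y p c : X} (hp : p ∈ projSet C y)
    (hc : c ∈ C) : ‖p - c‖ ≤ 2 * ‖y - c‖ :=
  calc ‖p - c‖ ≤ ‖p - y‖ + ‖y - c‖ := norm_sub_le_norm_sub_add_norm_sub ..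
    _ ≤ 2 * ‖y - c‖ := by linarith [norm_sub_rev p y, norm_sub_le_of_mem_projSet hp hc]

def marpStep (x Y : ℕ → X) (n : ℕ) : ℝ :=
  max ‖x n - Y n‖ ‖Y (n + 1) - x n‖

lemma marpStep_nonneg (x Y : ℕ → X) (n : ℕ) : 0 ≤ marpStep x Y n :=
  le_max_of_le_left (norm_nonneg _)

lemma dist_le_two_mul_marpStep (x Y : ℕ → X) (n : ℕ) :
    dist (Y n) (Y (n + 1)) ≤ 2 * marpStep x Y n := by
  rw [dist_comm, dist_eq_norm, marpStep]
  linarith [norm_sub_le_norm_sub_add_norm_sub (Y (n + 1)) (x n) (Y n),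
    le_max_left (‖x n - Y n‖) (‖Y (n + 1) - x n‖), le_max_right (‖x n - Y n‖) (‖Y (n + 1) - x n‖)]

end Normed

section NormedSpace

variable {X : Type*} [NormedAddCommGroup X] [NormedSpace ℝ X]

lemma smul_mem_pnCone {A D : Set X} {p u : X} {t : ℝ} (ht : 0 ≤ t) (hu : u ∈ pnCone A D p) :
    t • u ∈ pnCone A D p := by
  obtain ⟨s, hs, z, hz, hpz, rfl⟩ := hu
  exact ⟨t * s, mul_nonneg ht hs, z, hz, hpz, (mul_smul t s _).symm⟩

lemma sub_mem_pnCone {A D : Set X} {z p : X} (hz : z ∈ D) (hp : p ∈ projSet A z) :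
    z - p ∈ pnCone A D p :=
  ⟨1, zero_le_one, z, hz, hp, (one_smul ℝ _).symm⟩

variable {A B S : Set X} {lam mu : ℕ → ℝ} {a x b Y : ℕ → X}

namespace IsMARP

variable (hM : IsMARP A B lam mu a x b Y)
include hM

lemma x_eq_lineMap (n : ℕ) : x n = AffineMap.lineMap (Y n) (a n) (lam n) := by
  rw [AffineMap.lineMap_apply_module]; exact (hM n).2.1

lemma Y_succ_eq_lineMap (n : ℕ) : Y (n + 1) = AffineMap.lineMap (x n) (b n) (mu n) := by
  rw [AffineMap.lineMap_apply_module]; exact (hM n).2.2.2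

lemma norm_x_sub_Y {n : ℕ} (hn : 0 ≤ lam n) : ‖x n - Y n‖ = lam n * ‖Y n - a n‖ := by
  rw [hM.x_eq_lineMap, ← dist_eq_norm, dist_lineMap_left, Real.norm_of_nonneg hn, dist_eq_norm]

lemma norm_Y_succ_sub_x {n : ℕ} (hn : 0 ≤ mu n) : ‖Y (n + 1) - x n‖ = mu n * ‖x n - b n‖ := by
  rw [hM.Y_succ_eq_lineMap, ← dist_eq_norm, dist_lineMap_left, Real.norm_of_nonneg hn,
    dist_eq_norm]

lemma mem_of_projAbsorbing (hlam : ∀ n, lam n ∈ Ioc (0 : ℝ) 1)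
    (hmu : ∀ n, mu n ∈ Ioc (0 : ℝ) 1) (hSA : ProjAbsorbing A S) (hSB : ProjAbsorbing B S)
    (hY0 : Y 0 ∈ S) (n : ℕ) : Y n ∈ S ∧ x n ∈ S := by
  have hx : ∀ n, Y n ∈ S → x n ∈ S := fun n hY =>
    hSA _ hY _ (hM n).1
      (hM.x_eq_lineMap n ▸ lineMap_mem_segment ℝ _ _ (Ioc_subset_Icc_self (hlam n)))
  induction n with
  | zero => exact ⟨hY0, hx 0 hY0⟩
  | succ n ih =>
    have hY : Y (n + 1) ∈ S := hSB _ ih.2 _ (hM n).2.2.1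
      (hM.Y_succ_eq_lineMap n ▸ lineMap_mem_segment ℝ _ _ (Ioc_subset_Icc_self (hmu n)))
    exact ⟨hY, hx _ hY⟩

lemma norm_x_sub_le {c : X} (hc : c ∈ A) {n : ℕ} (hn : lam n ∈ Icc (0 : ℝ) 1) :
    ‖x n - c‖ ≤ 2 * ‖Y n - c‖ := by
  have hball := (convex_closedBall c (2 * ‖Y n - c‖)).segment_subset
    (mem_closedBall_iff_norm.2 (by linarith [norm_nonneg (Y n - c)]))
    (mem_closedBall_iff_norm.2 (norm_sub_le_two_mul_of_mem_projSet (hM n).1 hc))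
    (hM.x_eq_lineMap n ▸ lineMap_mem_segment ℝ _ _ hn)
  exact mem_closedBall_iff_norm.1 hball

lemma marpStep_le (hlam : ∀ n, lam n ∈ Ioc (0 : ℝ) 1) (hmu : ∀ n, mu n ∈ Ioc (0 : ℝ) 1)
    {c : X} (hc : c ∈ A ∩ B) (n : ℕ) : marpStep x Y n ≤ 2 * ‖Y n - c‖ := by
  have hxY : ‖x n - Y n‖ ≤ ‖Y n - c‖ := by
    rw [hM.norm_x_sub_Y (hlam n).1.le]
    exact (mul_le_of_le_one_left (norm_nonneg _) (hlam n).2).trans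
      (norm_sub_le_of_mem_projSet (hM n).1 hc.1)
  have hYx : ‖Y (n + 1) - x n‖ ≤ ‖x n - c‖ := by
    rw [hM.norm_Y_succ_sub_x (hmu n).1.le]
    exact (mul_le_of_le_one_left (norm_nonneg _) (hmu n).2).trans
      (norm_sub_le_of_mem_projSet (hM n).2.2.1 hc.2)
  exact max_le (by linarith [norm_nonneg (Y n - c)])
    (hYx.trans (hM.norm_x_sub_le hc.1 (Ioc_subset_Icc_self (hlam n))))

lemma mem_inter_of_tendsto (hA : IsClosed A) (hB : IsClosed B) {lmin mmin : ℝ}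
    (hlmin : 0 < lmin) (hmmin : 0 < mmin) (hlam : ∀ n, lmin ≤ lam n) (hmu : ∀ n, mmin ≤ mu n)
    (hstep : Tendsto (marpStep x Y) atTop (𝓝 0)) {cbar : X} (hY : Tendsto Y atTop (𝓝 cbar)) :
    cbar ∈ A ∩ B := by
  have hx : Tendsto x atTop (𝓝 cbar) := hY.congr_dist <|
    squeeze_zero (fun _ => dist_nonneg) (fun n => (dist_comm _ _).trans_le
      ((dist_eq_norm _ _).trans_le (le_max_left _ _))) hstep
  have ha : Tendsto a atTop (𝓝 cbar) := hY.congr_dist <| by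
    refine squeeze_zero (fun _ => dist_nonneg) (fun n => ?_) (by simpa using hstep.div_const lmin)
    rw [dist_eq_norm, le_div_iff₀ hlmin, mul_comm]
    calc lmin * ‖Y n - a n‖ ≤ lam n * ‖Y n - a n‖ := by gcongr; exact hlam n
      _ = ‖x n - Y n‖ := (hM.norm_x_sub_Y (hlmin.le.trans (hlam n))).symm
      _ ≤ marpStep x Y n := le_max_left _ _
  have hb : Tendsto b atTop (𝓝 cbar) := hx.congr_dist <| by
    refine squeeze_zero (fun _ => dist_nonneg) (fun n => ?_) (by simpa using hstep.div_const mmin)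
    rw [dist_eq_norm, le_div_iff₀ hmmin, mul_comm]
    calc mmin * ‖x n - b n‖ ≤ mu n * ‖x n - b n‖ := by gcongr; exact hmu n
      _ = ‖Y (n + 1) - x n‖ := (hM.norm_Y_succ_sub_x (hmmin.le.trans (hmu n))).symm
      _ ≤ marpStep x Y n := le_max_right _ _
  exact ⟨hA.mem_of_tendsto ha (.of_forall fun n => (hM n).1.1),
    hB.mem_of_tendsto hb (.of_forall fun n => (hM n).2.2.1.1)⟩

lemma exists_limit_of_marpStep_le [CompleteSpace X] (hA : IsClosed A) (hB : IsClosed B)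
    {lmin mmin : ℝ} (hlmin : 0 < lmin) (hmmin : 0 < mmin) (hlam : ∀ n, lmin ≤ lam n)
    (hmu : ∀ n, mmin ≤ mu n) {C ρ : ℝ} (hρ0 : 0 ≤ ρ) (hρ1 : ρ < 1)
    (hstep : ∀ n, marpStep x Y n ≤ C * ρ ^ n) :
    ∃ cbar ∈ A ∩ B, ∃ M : ℝ, 0 ≤ M ∧
      ∀ n : ℕ, max (‖x n - cbar‖) (‖Y (n + 1) - cbar‖) ≤ M * ρ ^ n := by
  have hC : 0 ≤ C := by simpa using (marpStep_nonneg x Y 0).trans (hstep 0)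
  have h1ρ : 0 < 1 - ρ := sub_pos.2 hρ1
  have hY : ∀ n, dist (Y n) (Y (n + 1)) ≤ 2 * C * ρ ^ n := fun n => by
    linarith [dist_le_two_mul_marpStep x Y n, hstep n]
  obtain ⟨cbar, hcbar⟩ := cauchySeq_tendsto_of_complete (cauchySeq_of_le_geometric _ _ hρ1 hY)
  have hYcbar : ∀ n, ‖Y n - cbar‖ ≤ 2 * C / (1 - ρ) * ρ ^ n := fun n => by
    rw [← dist_eq_norm, div_mul_eq_mul_div]
    exact dist_le_of_le_geometric_of_tendsto _ _ hρ1 hY hcbar n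
  have hstep0 : Tendsto (marpStep x Y) atTop (𝓝 0) :=
    squeeze_zero (marpStep_nonneg x Y) hstep
      (by simpa using (tendsto_pow_atTop_nhds_zero_of_lt_one hρ0 hρ1).const_mul C)
  refine ⟨cbar, hM.mem_inter_of_tendsto hA hB hlmin hmmin hlam hmu hstep0 hcbar,
    C + 2 * C / (1 - ρ), by positivity, fun n => max_le ?_ ?_⟩
  · linarith [norm_sub_le_norm_sub_add_norm_sub (x n) (Y n) cbar,
      (le_max_left _ _).trans (hstep n), hYcbar n]
  · calc ‖Y (n + 1) - cbar‖ ≤ 2 * C / (1 - ρ) * ρ ^ (n + 1) := hYcbar (n + 1)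
      _ ≤ 2 * C / (1 - ρ) * ρ ^ n := mul_le_mul_of_nonneg_left
          (pow_le_pow_of_le_one hρ0 hρ1.le n.le_succ) (div_nonneg (by positivity) h1ρ.le)
      _ ≤ (C + 2 * C / (1 - ρ)) * ρ ^ n := by gcongr; linarith

end IsMARP

end NormedSpace

section InnerProduct

variable {X : Type*} [NormedAddCommGroup X] [InnerProductSpace ℝ X]

lemma norm_smul_sub_smul_sq_le {u w : X} {s t θ : ℝ} (hs : 0 ≤ s) (ht : 0 ≤ t)
    (hcq : ⟪u, -w⟫ ≤ θ * (‖u‖ * ‖w‖)) :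
    ‖s • u - t • w‖ ^ 2 ≤ s ^ 2 * ‖u‖ ^ 2 + t ^ 2 * ‖w‖ ^ 2 + 2 * θ * t * s * (‖u‖ * ‖w‖) := by
  rw [inner_neg_right] at hcq
  rw [norm_sub_sq_real, real_inner_smul_left, real_inner_smul_right, norm_smul, norm_smul,
    Real.norm_of_nonneg hs, Real.norm_of_nonneg ht]
  nlinarith [mul_nonneg hs ht]

lemma mul_norm_le_of_relaxed_step {u w v : X} {l l' m θ ρ : ℝ} (hl : 0 < l) (hl1 : l ≤ 1)
    (hl' : 0 ≤ l') (hm : 0 ≤ m) (hθ : 0 ≤ θ) (hρ : 0 ≤ ρ) (hrate : rateTerm θ l l' ≤ ρ ^ 2)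
    (hcq : ⟪u, -w⟫ ≤ θ * (‖u‖ * ‖w‖)) (hv : ‖v‖ ≤ ‖(1 - l) • u - m • w‖) :
    l' * ‖v‖ ≤ ρ * max (l * ‖u‖) (m * ‖w‖) := by
  set M := max (l * ‖u‖) (m * ‖w‖)
  have hlu : l * ‖u‖ ≤ M := le_max_left _ _
  have hmw : m * ‖w‖ ≤ M := le_max_right _ _
  have hM : 0 ≤ M := (by positivity : 0 ≤ l * ‖u‖).trans hlu
  have h1l : 0 ≤ 1 - l := sub_nonneg.2 hl1
  have hv2 : ‖v‖ ^ 2 ≤ (1 - l) ^ 2 * ‖u‖ ^ 2 + m ^ 2 * ‖w‖ ^ 2 +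
      2 * θ * m * (1 - l) * (‖u‖ * ‖w‖) :=
    (pow_le_pow_left₀ (norm_nonneg _) hv 2).trans (norm_smul_sub_smul_sq_le h1l hm hcq)
  have hq : l ^ 2 * ‖v‖ ^ 2 ≤ M ^ 2 * (l ^ 2 + (1 - l) ^ 2 + 2 * θ * l * (1 - l)) := by
    nlinarith [mul_le_mul_of_nonneg_left (pow_le_pow_left₀ (by positivity) hlu 2)
        (sq_nonneg (1 - l)),
      mul_le_mul_of_nonneg_left (pow_le_pow_left₀ (by positivity) hmw 2) (sq_nonneg l),
      mul_le_mul_of_nonneg_left (mul_le_mul hlu hmw (by positivity) hM)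
        (mul_nonneg (mul_nonneg (mul_nonneg zero_le_two hθ) hl.le) h1l),
      mul_le_mul_of_nonneg_left hv2 (sq_nonneg l)]
  have hsq : (l' * ‖v‖) ^ 2 ≤ (ρ * M) ^ 2 :=
    calc (l' * ‖v‖) ^ 2 = (l' / l) ^ 2 * (l ^ 2 * ‖v‖ ^ 2) := by field_simp
      _ ≤ (l' / l) ^ 2 * (M ^ 2 * (l ^ 2 + (1 - l) ^ 2 + 2 * θ * l * (1 - l))) := by gcongr
      _ = M ^ 2 * rateTerm θ l l' := by rw [rateTerm]; ring
      _ ≤ M ^ 2 * ρ ^ 2 := by gcongr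
      _ = (ρ * M) ^ 2 := by ring
  exact (pow_le_pow_iff_left₀ (by positivity) (mul_nonneg hρ hM) two_ne_zero).1 hsq

def cqSet (A B S : Set X) (c : X) (δ : ℝ) : Set ℝ :=
  {r : ℝ | ∃ p ∈ A, ∃ q ∈ B, ∃ u ∈ pnCone A S p, ∃ v : X, -v ∈ pnCone B S q ∧
    ‖u‖ ≤ 1 ∧ ‖v‖ ≤ 1 ∧ ‖p - c‖ ≤ δ ∧ ‖q - c‖ ≤ δ ∧ r = ⟪u, v⟫}

lemma cqNumber_eq_sSup_cqSet (A B S : Set X) (c : X) (δ : ℝ) :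
    cqNumber A B S c δ = sSup (cqSet A B S c δ) :=
  rfl

lemma bddAbove_cqSet (A B S : Set X) (c : X) (δ : ℝ) : BddAbove (cqSet A B S c δ) := by
  refine ⟨1, ?_⟩
  rintro _ ⟨p, -, q, -, u, -, v, -, hu, hv, -, -, rfl⟩
  exact (real_inner_le_norm u v).trans (mul_le_one₀ hu (norm_nonneg v) hv)

lemma cqNumber_nonneg (A B S : Set X) (c : X) (δ : ℝ) : 0 ≤ cqNumber A B S c δ := by
  rw [cqNumber_eq_sSup_cqSet]
  rcases (cqSet A B S c δ).eq_empty_or_nonempty with h | ⟨_, p, hp, q, hq, u, hu, v, hv, -, hv1,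
    hpc, hqc, -⟩
  · rw [h, Real.sSup_empty]
  · refine le_csSup (bddAbove_cqSet A B S c δ) ⟨p, hp, q, hq, 0, ?_, v, hv, by simp, hv1, hpc,
      hqc, by simp⟩
    simpa using smul_mem_pnCone le_rfl hu

lemma inner_neg_le_of_cqNumber_le {A B S : Set X} {c p q u w : X} {δ θ : ℝ}
    (hδ : cqNumber A B S c δ ≤ θ) (hp : p ∈ A) (hq : q ∈ B) (hpc : ‖p - c‖ ≤ δ)
    (hqc : ‖q - c‖ ≤ δ) (hu : u ∈ pnCone A S p) (hw : w ∈ pnCone B S q) :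
    ⟪u, -w⟫ ≤ θ * (‖u‖ * ‖w‖) := by
  rcases eq_or_ne u 0 with rfl | hu0
  · simp
  rcases eq_or_ne w 0 with rfl | hw0
  · simp
  have hunit : ∀ {z : X}, z ≠ 0 → ‖‖z‖⁻¹ • z‖ = 1 := fun hz => by
    rw [norm_smul, norm_inv, norm_norm, inv_mul_cancel₀ (norm_ne_zero_iff.2 hz)]
  have hle : ⟪‖u‖⁻¹ • u, -(‖w‖⁻¹ • w)⟫ ≤ θ :=
    (le_csSup (bddAbove_cqSet A B S c δ) ⟨p, hp, q, hq, _, smul_mem_pnCone (by positivity) hu, _,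
      by simpa using smul_mem_pnCone (by positivity) hw, (hunit hu0).le,
      by rw [norm_neg, hunit hw0], hpc, hqc, rfl⟩).trans hδ
  have hpos : 0 < ‖u‖ * ‖w‖ := by positivity
  calc ⟪u, -w⟫ = (‖u‖ * ‖w‖) * ⟪‖u‖⁻¹ • u, -(‖w‖⁻¹ • w)⟫ := by
        rw [← smul_neg, real_inner_smul_left, real_inner_smul_right]
        field_simp
    _ ≤ (‖u‖ * ‖w‖) * θ := mul_le_mul_of_nonneg_left hle hpos.le
    _ = θ * (‖u‖ * ‖w‖) := mul_comm _ _

namespace IsMARP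

variable {A B S : Set X} {lam mu : ℕ → ℝ} {a x b Y : ℕ → X} (hM : IsMARP A B lam mu a x b Y)
include hM

lemma marpStep_succ_le (hlam : ∀ n, lam n ∈ Ioc (0 : ℝ) 1) (hmu : ∀ n, mu n ∈ Ioc (0 : ℝ) 1)
    {θ ρ : ℝ} {n : ℕ} (hθ : 0 ≤ θ) (hρ0 : 0 ≤ ρ) (hρ1 : ρ ≤ 1)
    (hrateL : rateTerm θ (lam n) (lam (n + 1)) ≤ ρ ^ 2)
    (hrateM : rateTerm θ (mu n) (mu (n + 1)) ≤ ρ ^ 2)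
    (hcq₀ : ⟪Y n - a n, -(x n - b n)⟫ ≤ θ * (‖Y n - a n‖ * ‖x n - b n‖))
    (hcq₁ : ⟪Y (n + 1) - a (n + 1), -(x n - b n)⟫ ≤
      θ * (‖Y (n + 1) - a (n + 1)‖ * ‖x n - b n‖)) :
    marpStep x Y (n + 1) ≤ ρ * marpStep x Y n := by
  have hmarpStep : ∀ k, marpStep x Y k = max (lam k * ‖Y k - a k‖) (mu k * ‖x k - b k‖) :=
      fun k => by
    rw [marpStep, hM.norm_x_sub_Y (hlam k).1.le, hM.norm_Y_succ_sub_x (hmu k).1.le]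
  have hA : lam (n + 1) * ‖Y (n + 1) - a (n + 1)‖ ≤ ρ * marpStep x Y n := by
    rw [hmarpStep]
    refine mul_norm_le_of_relaxed_step (hlam n).1 (hlam n).2 (hlam _).1.le (hmu n).1.le hθ hρ0
      hrateL hcq₀ ?_
    have hid : (1 - lam n) • (Y n - a n) - mu n • (x n - b n) = Y (n + 1) - a n := by
      rw [(hM n).2.2.2, (hM n).2.1]; module
    rw [hid]
    exact norm_sub_le_of_mem_projSet (hM (n + 1)).1 (hM n).1.1
  have hB : mu (n + 1) * ‖x (n + 1) - b (n + 1)‖ ≤ ρ * marpStep x Y n := by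
    have hcq : ⟪x n - b n, -(Y (n + 1) - a (n + 1))⟫ ≤
        θ * (‖x n - b n‖ * ‖Y (n + 1) - a (n + 1)‖) := by
      rwa [inner_neg_right, real_inner_comm, ← inner_neg_right, mul_comm ‖x n - b n‖]
    have hid : (1 - mu n) • (x n - b n) - lam (n + 1) • (Y (n + 1) - a (n + 1)) =
        x (n + 1) - b n := by
      rw [(hM (n + 1)).2.1, (hM n).2.2.2]; module
    calc mu (n + 1) * ‖x (n + 1) - b (n + 1)‖
        ≤ ρ * max (mu n * ‖x n - b n‖) (lam (n + 1) * ‖Y (n + 1) - a (n + 1)‖) :=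
          mul_norm_le_of_relaxed_step (hmu n).1 (hmu n).2 (hmu _).1.le (hlam _).1.le hθ hρ0
            hrateM hcq (hid ▸ norm_sub_le_of_mem_projSet (hM (n + 1)).2.2.1 (hM n).2.2.1.1)
      _ ≤ ρ * marpStep x Y n := by
          refine mul_le_mul_of_nonneg_left (max_le ?_ (hA.trans ?_)) hρ0
          · exact (le_max_right _ _).trans (hmarpStep n).ge
          · exact mul_le_of_le_one_left (marpStep_nonneg x Y n) hρ1
  rw [hmarpStep]
  exact max_le hA hB

lemma marpStep_le_geometric (hlam : ∀ n, lam n ∈ Ioc (0 : ℝ) 1)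
    (hmu : ∀ n, mu n ∈ Ioc (0 : ℝ) 1) (hSA : ProjAbsorbing A S) (hSB : ProjAbsorbing B S)
    {c : X} (hc : c ∈ A ∩ B) {θ ρ δ : ℝ} (hθ : 0 ≤ θ) (hρ0 : 0 ≤ ρ) (hρ1 : ρ < 1)
    (hrate : ∀ n, rateTerm θ (lam n) (lam (n + 1)) ≤ ρ ^ 2 ∧
      rateTerm θ (mu n) (mu (n + 1)) ≤ ρ ^ 2)
    (hδ : cqNumber A B S c δ ≤ θ) (hY0 : Y 0 ∈ S) (hY0c : ‖Y 0 - c‖ ≤ δ * (1 - ρ) / 20)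
    (n : ℕ) : marpStep x Y n ≤ marpStep x Y 0 * ρ ^ n := by
  -- The iterates travel at most `4 ‖Y 0 - c‖ / (1 - ρ)`, so they stay within `δ / 4` of `c`,
  -- which keeps the projections `a k`, `b k` within `δ`.
  have hS := hM.mem_of_projAbsorbing hlam hmu hSA hSB hY0
  have hnear : ∀ k, ‖Y k - c‖ ≤ δ / 4 → ‖a k - c‖ ≤ δ ∧ ‖b k - c‖ ≤ δ := fun k hk =>
    ⟨by linarith [norm_sub_le_two_mul_of_mem_projSet (hM k).1 hc.1, norm_nonneg (Y k - c)],
      by linarith [norm_sub_le_two_mul_of_mem_projSet (hM k).2.2.1 hc.2,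
        hM.norm_x_sub_le hc.1 (Ioc_subset_Icc_self (hlam k))]⟩
  refine le_geometric_of_contracting_near zero_le_two hρ0 hρ1 (dist_le_two_mul_marpStep x Y)
    (c := c) (R := δ / 4) (fun k hk hk1 => ?_) ?_ n
  · rw [dist_eq_norm] at hk hk1
    have hcq : ∀ {j}, ‖Y j - c‖ ≤ δ / 4 →
        ⟪Y j - a j, -(x k - b k)⟫ ≤ θ * (‖Y j - a j‖ * ‖x k - b k‖) := fun hj =>
      inner_neg_le_of_cqNumber_le hδ (hM _).1.1 (hM k).2.2.1.1 (hnear _ hj).1 (hnear k hk).2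
        (sub_mem_pnCone (hS _).1 (hM _).1) (sub_mem_pnCone (hS k).2 (hM k).2.2.1)
    exact hM.marpStep_succ_le hlam hmu hθ hρ0 hρ1.le (hrate k).1 (hrate k).2 (hcq hk) (hcq hk1)
  · have h1ρ : 0 < 1 - ρ := sub_pos.2 hρ1
    have h2 := hM.marpStep_le hlam hmu hc 0
    rw [dist_eq_norm, add_div' _ _ _ h1ρ.ne', div_le_iff₀ h1ρ]
    nlinarith [norm_nonneg (Y 0 - c)]

end IsMARP

end InnerProduct

theorem marp_local_convergence_via_CQ_general
    {X : Type*} [NormedAddCommGroup X] [InnerProductSpace ℝ X] [FiniteDimensional ℝ X]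
    (A B : Set X) (hAclosed : IsClosed A)
    (hBclosed : IsClosed B)
    (S : Set X) (hSA : ProjAbsorbing A S) (hSB : ProjAbsorbing B S)
    (lam mu : ℕ → ℝ) (hlam : ∀ n, lam n ∈ Set.Ioc (0 : ℝ) 1)
    (hmu : ∀ n, mu n ∈ Set.Ioc (0 : ℝ) 1)
    (hlam_mono : ∀ n : ℕ, lam (n + 1) ≤ lam n) (hmu_mono : ∀ n : ℕ, mu (n + 1) ≤ mu n)
    (laminf muinf : ℝ)
    (hlaminf : Tendsto lam atTop (nhds laminf)) (hmuinf : Tendsto mu atTop (nhds muinf))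
    (hα₀lt : max (lam 0) (mu 0) < 1) (hαinf : 0 < min laminf muinf)
    (c : X) (hc : c ∈ A ∩ B)
    (θbar : ℝ)
    (hθbar : Tendsto (fun δ => cqNumber A B S c δ) (nhdsWithin 0 (Set.Ioi 0)) (nhds θbar))
    (θ : ℝ) (hθ : θ ∈ Set.Ioo θbar 1)
    (ρhat : ℝ)
    (hρhat : ρhat = Real.sqrt (⨆ n : ℕ, max
      ((lam (n + 1) / lam n) ^ 2 *
        ((lam n) ^ 2 + (1 - lam n) ^ 2 + 2 * θ * lam n * (1 - lam n)))
      ((mu (n + 1) / mu n) ^ 2 *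
        ((mu n) ^ 2 + (1 - mu n) ^ 2 + 2 * θ * mu n * (1 - mu n))))) :
    0 < ρhat ∧ ρhat < 1 ∧
    ∃ δ : ℝ, 0 < δ ∧
      ∀ a x b Y : ℕ → X, IsMARP A B lam mu a x b Y → Y 0 ∈ S → ‖Y 0 - c‖ ≤ δ →
        ∃ cbar ∈ A ∩ B, ∃ M : ℝ, 0 ≤ M ∧
          ∀ n : ℕ, max (‖x n - cbar‖) (‖Y (n + 1) - cbar‖) ≤ M * ρhat ^ n := by
  have hθ0 : 0 ≤ θ := (ge_of_tendsto' hθbar (cqNumber_nonneg A B S c)).trans hθ.1.le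
  obtain ⟨δ₀, hδ₀θ, hδ₀⟩ : ∃ δ₀, cqNumber A B S c δ₀ < θ ∧ δ₀ ∈ Ioi 0 :=
    ((hθbar.eventually (gt_mem_nhds hθ.1)).and self_mem_nhdsWithin).exists
  have hlamA : Antitone lam := antitone_nat_of_succ_le hlam_mono
  have hmuA : Antitone mu := antitone_nat_of_succ_le hmu_mono
  have hlaminf0 : 0 < laminf := hαinf.trans_le (min_le_left _ _)
  have hmuinf0 : 0 < muinf := hαinf.trans_le (min_le_right _ _)
  obtain ⟨bl, hbl1, hbl⟩ := exists_rateTerm_le_lt_one hθ0 hθ.2 (fun n => (hlam n).1) hlamA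
    hlaminf hlaminf0 ((le_max_left _ _).trans_lt hα₀lt)
  obtain ⟨bm, hbm1, hbm⟩ := exists_rateTerm_le_lt_one hθ0 hθ.2 (fun n => (hmu n).1) hmuA
    hmuinf hmuinf0 ((le_max_right _ _).trans_lt hα₀lt)
  obtain ⟨⟨hρ0, hρ1⟩, hrate⟩ : ρhat ∈ Ioo 0 1 ∧ ∀ n,
      max (rateTerm θ (lam n) (lam (n + 1))) (rateTerm θ (mu n) (mu (n + 1))) ≤ ρhat ^ 2 :=
    hρhat ▸ sqrt_iSup_mem_Ioo_and_le_sq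
      ((rateTerm_pos hθ0 (hlam 0).1 (hlam 0).2 (hlam 1).1).trans_le (le_max_left _ _))
      (fun n => max_le_max (hbl n) (hbm n)) (max_lt hbl1 hbm1)
  refine ⟨hρ0, hρ1, δ₀ * (1 - ρhat) / 20, by nlinarith [hδ₀.out], fun a x b Y hM hY0 hY0c => ?_⟩
  exact hM.exists_limit_of_marpStep_le hAclosed hBclosed hlaminf0 hmuinf0
    (hlamA.le_of_tendsto hlaminf) (hmuA.le_of_tendsto hmuinf) hρ0.le hρ1
    (hM.marpStep_le_geometric hlam hmu hSA hSB hc hθ0 hρ0.le hρ1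
      (fun n => ⟨(le_max_left _ _).trans (hrate n), (le_max_right _ _).trans (hrate n)⟩)
      hδ₀θ.le hY0 hY0c)

/-- Theorem 5.12 (local convergence of the MARP via the CQ condition). -/
theorem marp_local_convergence_via_CQ
    {X : Type*} [NormedAddCommGroup X] [InnerProductSpace ℝ X] [FiniteDimensional ℝ X]
    (A B : Set X) (hA : A.Nonempty) (hAclosed : IsClosed A)
    (hB : B.Nonempty) (hBclosed : IsClosed B)
    (S : Set X) (hSA : ProjAbsorbing A S) (hSB : ProjAbsorbing B S)
    (lam mu : ℕ → ℝ) (hlam : ∀ n, lam n ∈ Set.Ioc (0 : ℝ) 1)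
    (hmu : ∀ n, mu n ∈ Set.Ioc (0 : ℝ) 1)
    (hlam_mono : ∀ n : ℕ, lam (n + 1) ≤ lam n) (hmu_mono : ∀ n : ℕ, mu (n + 1) ≤ mu n)
    (laminf muinf : ℝ)
    (hlaminf : Tendsto lam atTop (nhds laminf)) (hmuinf : Tendsto mu atTop (nhds muinf))
    (hα₀lt : max (lam 0) (mu 0) < 1) (hαinf : 0 < min laminf muinf)
    (c : X) (hc : c ∈ A ∩ B)
    (hCQ : ncCone A S c ∩ (-(ncCone B S c)) ⊆ {0})
    (θbar : ℝ)
    (hθbar : Tendsto (fun δ => cqNumber A B S c δ) (nhdsWithin 0 (Set.Ioi 0)) (nhds θbar))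
    (hθbar1 : θbar < 1)
    (θ : ℝ) (hθ : θ ∈ Set.Ioo θbar 1)
    (ρhat : ℝ)
    (hρhat : ρhat = Real.sqrt (⨆ n : ℕ, max
      ((lam (n + 1) / lam n) ^ 2 *
        ((lam n) ^ 2 + (1 - lam n) ^ 2 + 2 * θ * lam n * (1 - lam n)))
      ((mu (n + 1) / mu n) ^ 2 *
        ((mu n) ^ 2 + (1 - mu n) ^ 2 + 2 * θ * mu n * (1 - mu n))))) :
    0 < ρhat ∧ ρhat < 1 ∧
    ∃ δ : ℝ, 0 < δ ∧
      ∀ a x b Y : ℕ → X, IsMARP A B lam mu a x b Y → Y 0 ∈ S → ‖Y 0 - c‖ ≤ δ →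
        ∃ cbar ∈ A ∩ B, ∃ M : ℝ, 0 ≤ M ∧
          ∀ n : ℕ, max (‖x n - cbar‖) (‖Y (n + 1) - cbar‖) ≤ M * ρhat ^ n :=
  marp_local_convergence_via_CQ_general A B hAclosed hBclosed S hSA hSB lam mu hlam hmu hlam_mono
    hmu_mono laminf muinf hlaminf hmuinf hα₀lt hαinf c hc θbar hθbar θ hθ ρhat hρhat
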